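/- Let M, N be normal subgroups of a finite group G with M ∩ N = 1, and K = M × N, where M and N are perfect. Let α ∈ Irr(M) and β ∈ Irr(N) be G-invariant, and assume β extends to G. Then α × β ∈ Irr(K) extends to G if and only if α extends to G. -/

import Mathlib

noncomputable section
open scoped Classical

/-- The set of irreducible complex characters of a finite group. -/
def Irr (G : Type) [Group G] [Fintype G] : Set (G → ℂ) :=
  {χ | ∃ V : FDRep ℂ G, CategoryTheory.Simple V ∧ χ = V.character}

/-!
Since `M` and `N` commute elementwise, Schur's lemma makes `M` act by scalars on any
representation whose restriction to `N` is irreducible; as `M` is perfect, these scalars are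
trivial. So `M` acts trivially on a representation `Y` affording an extension of `β`, and `N`
acts trivially on a representation `X₁` affording an extension of `α`. Then `X₁ ⊗ Y` affords
`α × β` on `MN`, and is irreducible because `α × β` has norm one. Conversely, if `X` affords an
extension of `α × β`, the `N`-invariants of `Hom(Y, X)` form a `G`-representation whose
character on `M` is `|N|⁻¹ ∑ₙ β(n⁻¹) α(m) β(n) = α(m)`.
-/

open CategoryTheory MonoidalCategory

theorem Subgroup.le_ker_of_commutator_eq_self {G G' : Type*} [Group G] [Group G']
    (f : G →* G') {P : Subgroup G} (hP : ⁅P, P⁆ = P)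
    (hcomm : ∀ a ∈ P, ∀ b ∈ P, Commute (f a) (f b)) : P ≤ f.ker := by
  rw [← hP, Subgroup.commutator_le]
  intro a ha b hb
  rw [MonoidHom.mem_ker, map_commutatorElement, commutatorElement_eq_one_iff_commute]
  exact hcomm a ha b hb

theorem LinearMap.trace_restrict_eq_trace_comp_of_isProj {k V : Type*} [Field k]
    [AddCommGroup V] [Module k V] [FiniteDimensional k V] {p : Submodule k V} {π : V →ₗ[k] V}
    (hπ : IsProj p π) (f : V →ₗ[k] V) (hf : ∀ x ∈ p, f x ∈ p) :
    trace k p (f.restrict hf) = trace k V (f ∘ₗ π) := by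
  let q : V →ₗ[k] p := π.codRestrict p hπ.map_mem
  have hfπ : f ∘ₗ π = (p.subtype ∘ₗ f.restrict hf) ∘ₗ q := rfl
  have hqp : q ∘ₗ p.subtype = LinearMap.id :=
    LinearMap.ext fun x ↦ Subtype.ext (hπ.map_id x x.2)
  rw [hfπ, trace_comp_comm', ← comp_assoc, hqp, id_comp]

theorem Representation.character_toInvariants {k G V : Type*} [Field k] [Group G] [Fintype G]
    [AddCommGroup V] [Module k V] [FiniteDimensional k V] (ρ : Representation k G V)
    (S : Subgroup G) [S.Normal] [Invertible (Fintype.card S : k)] (g : G) :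
    (ρ.toInvariants S).character g = ⅟(Fintype.card S : k) * ∑ s : S, ρ.character (g * s) := by
  change LinearMap.trace k _ ((ρ g).restrict (ρ.le_comap_invariants S g)) = _
  rw [LinearMap.trace_restrict_eq_trace_comp_of_isProj (isProj_averageMap (ρ.comp S.subtype))]
  simp [character, GroupAlgebra.average, map_sum, Finset.mul_sum, ← Module.End.mul_eq_comp]

namespace FDRep

universe u

variable {k : Type u} [Field k] {G H : Type u} [Group G] [Group H]

abbrev res (φ : H →* G) (V : FDRep k G) : FDRep k H := (Action.res _ φ).obj V

abbrev homInvariants (Y X : FDRep k G) (N : Subgroup G) [N.Normal] : FDRep k G :=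
  FDRep.of ((Representation.linHom Y.ρ X.ρ).toInvariants N)

theorem character_mul_of_ρ_right_eq_one (V : FDRep k G) (a : G) {b : G} (hb : V.ρ b = 1) :
    V.character (a * b) = V.character a := by
  rw [character, map_mul, hb, mul_one, character]

theorem character_mul_of_ρ_left_eq_one (V : FDRep k G) {a : G} (b : G) (ha : V.ρ a = 1) :
    V.character (a * b) = V.character b := by
  rw [character, map_mul, ha, one_mul, character]

variable [IsAlgClosed k]

theorem exists_ρ_eq_smul_one_of_commute (φ : H →* G) (V : FDRep k G) [Simple (V.res φ)]
    {g : G} (hg : ∀ h, Commute g (φ h)) : ∃ c : k, V.ρ g = c • 1 := by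
  let T : V.res φ ⟶ V.res φ := ⟨Action.ρ V g, fun h ↦ by
    change Action.ρ V g * Action.ρ V (φ h) = Action.ρ V (φ h) * Action.ρ V g
    rw [← map_mul, ← map_mul, (hg h).eq]⟩
  obtain ⟨c, hc⟩ := endomorphism_simple_eq_smul_id k T
  exact ⟨c, congr(($hc.symm).hom.hom.hom)⟩

theorem ρ_eq_one_of_commutator_eq_self (V : FDRep k G) {P Q : Subgroup G}
    [Simple (V.res Q.subtype)] (hP : ⁅P, P⁆ = P) (hcomm : ∀ p ∈ P, ∀ q ∈ Q, Commute p q)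
    {p : G} (hp : p ∈ P) : V.ρ p = 1 := by
  have hscalar (a : G) (ha : a ∈ P) : ∃ c : k, V.ρ a = c • 1 :=
    exists_ρ_eq_smul_one_of_commute Q.subtype V fun q ↦ hcomm a ha q q.2
  have hker := Subgroup.le_ker_of_commutator_eq_self (Representation.asGroupHom V.ρ) hP
    fun a ha b hb ↦ by
      obtain ⟨c, hc⟩ := hscalar a ha
      obtain ⟨d, hd⟩ := hscalar b hb
      rw [← Commute.units_val_iff, Representation.asGroupHom_apply,
        Representation.asGroupHom_apply, hc, hd]
      exact ((Commute.one_left 1).smul_left c).smul_right d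
  rw [← Representation.asGroupHom_apply, hker hp, Units.val_one]

theorem simple_of_simple_res [Finite G] [NeZero (Nat.card G : k)] (φ : H →* G)
    (V : FDRep k G) [Simple (V.res φ)] : Simple V := by
  let F := Action.res (FGModuleCat k) φ
  have hle : Module.finrank k (V ⟶ V) ≤ 1 := by
    rw [← finrank_endomorphism_simple_eq_one k (V.res φ)]
    exact LinearMap.finrank_le_finrank_of_injective (f := F.mapLinearMap k) F.map_injective
  have hid : 𝟙 V ≠ 0 := fun h ↦ id_nonzero (V.res φ) (by simpa using congr(F.map $h))
  have hpos := Module.finrank_pos_iff_exists_ne_zero (R := k).mpr ⟨_, hid⟩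
  rw [simple_iff_end_is_rank_one]
  omega

variable [CharZero k]

theorem simple_of_character_eq [Fintype G] (V W : FDRep k G) [Simple V]
    (h : V.character = W.character) : Simple W := by
  rw [simple_iff_char_is_norm_one, ← h, ← simple_iff_char_is_norm_one]
  infer_instance

theorem simple_of_character_eq_mul {H₁ H₂ : Type u} [Group H₁] [Group H₂] [Fintype H₁]
    [Fintype H₂] (A : FDRep k H₁) (B : FDRep k H₂) [Simple A] [Simple B]
    (V : FDRep k (H₁ × H₂)) (h : ∀ a b, V.character (a, b) = A.character a * B.character b) :
    Simple V := by
  have hA := (simple_iff_char_is_norm_one A).mp ‹_›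
  have hB := (simple_iff_char_is_norm_one B).mp ‹_›
  rw [simple_iff_char_is_norm_one]
  simp_rw [Fintype.sum_prod_type, Prod.inv_mk, h]
  calc ∑ a, ∑ b, A.character a * B.character b * (A.character a⁻¹ * B.character b⁻¹)
      = (∑ a, A.character a * A.character a⁻¹) * ∑ b, B.character b * B.character b⁻¹ := by
        rw [Finset.sum_mul_sum]
        exact Finset.sum_congr rfl fun a _ ↦ Finset.sum_congr rfl fun b _ ↦ by ring
    _ = Nat.card (H₁ × H₂) := by rw [hA, hB, Nat.card_prod, Nat.cast_mul]

theorem character_homInvariants [Fintype G] (Y X : FDRep k G) (N : Subgroup G) [N.Normal]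
    [Simple (Y.res N.subtype)] {g : G} (hYg : Y.ρ g = 1) (c : k)
    (hX : ∀ n : N, X.character (g * n) = c * Y.character n) :
    (homInvariants Y X N).character g = c := by
  let : Invertible (Fintype.card N : k) := invertibleOfNonzero (by simp)
  have hYg' : Y.ρ g⁻¹ = 1 := by
    have := map_mul Y.ρ g⁻¹ g
    rwa [inv_mul_cancel, map_one, hYg, mul_one, eq_comm] at this
  have hnorm := (simple_iff_char_is_norm_one (Y.res N.subtype)).mp ‹_›
  have hterm (n : N) : (Representation.linHom Y.ρ X.ρ).character (g * n) =
      c * (Y.character n * Y.character n⁻¹) := by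
    rw [Representation.char_linHom]
    change Y.character _ * X.character _ = _
    rw [mul_inv_rev, character_mul_of_ρ_right_eq_one _ _ hYg', hX]
    ring
  change ((Representation.linHom Y.ρ X.ρ).toInvariants N).character g = c
  rw [Representation.character_toInvariants, Finset.sum_congr rfl fun n _ ↦ hterm n,
    ← Finset.mul_sum]
  change _ * (c * ∑ n : N, (Y.res N.subtype).character n * (Y.res N.subtype).character n⁻¹) = c
  rw [hnorm, Nat.card_eq_fintype_card, mul_left_comm, invOf_mul_self, mul_one]

end FDRep

open FDRep in
theorem stmt5_general (G : Type) [Group G] [Fintype G] (M N : Subgroup G)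
    (hM : M.Normal) (hN : N.Normal) (hMN : M ⊓ N = ⊥)
    (hMperf : ⁅M, M⁆ = M) (hNperf : ⁅N, N⁆ = N)
    (α : ↥M → ℂ) (hα : α ∈ Irr ↥M) (β : ↥N → ℂ) (hβ : β ∈ Irr ↥N)
    (hβext : ∃ χ ∈ Irr G, ∀ n : ↥N, χ ↑n = β n) :
    (∃ χ ∈ Irr G, ∀ (m n : G) (hm : m ∈ M) (hn : n ∈ N),
        χ (m * n) = α ⟨m, hm⟩ * β ⟨n, hn⟩) ↔
      (∃ χ ∈ Irr G, ∀ m : ↥M, χ ↑m = α m) := by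
  obtain ⟨A, _, rfl⟩ := hα
  obtain ⟨B, _, rfl⟩ := hβ
  obtain ⟨_, ⟨Y, _, rfl⟩, hYB⟩ := hβext
  have hcomm : ∀ m ∈ M, ∀ n ∈ N, Commute m n := fun m hm n hn ↦
    Subgroup.commute_of_normal_of_disjoint M N hM hN (disjoint_iff.mpr hMN) m n hm hn
  have : Simple (Y.res N.subtype) := simple_of_character_eq B _ (funext fun n ↦ (hYB n).symm)
  have hYM {m : G} (hm : m ∈ M) : Y.ρ m = 1 := Y.ρ_eq_one_of_commutator_eq_self hMperf hcomm hm
  constructor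
  · rintro ⟨_, ⟨X, _, rfl⟩, hX⟩
    have hW (m : M) : (homInvariants Y X N).character m = A.character m :=
      character_homInvariants Y X N (hYM m.2) _ fun n ↦ by rw [hX m n m.2 n.2, hYB n]
    have : Simple ((homInvariants Y X N).res M.subtype) :=
      simple_of_character_eq A _ (funext fun m ↦ (hW m).symm)
    exact ⟨_, ⟨_, simple_of_simple_res M.subtype _, rfl⟩, hW⟩
  · rintro ⟨_, ⟨X, _, rfl⟩, hXA⟩
    have : Simple (X.res M.subtype) := simple_of_character_eq A _ (funext fun m ↦ (hXA m).symm)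
    have hXN {n : G} (hn : n ∈ N) : X.ρ n = 1 :=
      X.ρ_eq_one_of_commutator_eq_self hNperf (fun n hn m hm ↦ (hcomm m hm n hn).symm) hn
    have hZ (m n : G) (hm : m ∈ M) (hn : n ∈ N) :
        (X ⊗ Y).character (m * n) = A.character ⟨m, hm⟩ * B.character ⟨n, hn⟩ := by
      rw [char_tensor, Pi.mul_apply, character_mul_of_ρ_right_eq_one X m (hXN hn),
        character_mul_of_ρ_left_eq_one Y n (hYM hm), hXA ⟨m, hm⟩, hYB ⟨n, hn⟩]
    let μ := M.subtype.noncommCoprod N.subtype fun m n ↦ hcomm m m.2 n n.2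
    have : Simple ((X ⊗ Y).res μ) :=
      simple_of_character_eq_mul A B _ fun m n ↦ hZ m n m.2 n.2
    exact ⟨_, ⟨_, simple_of_simple_res μ _, rfl⟩, hZ⟩

/-- Let `M, N ⊴ G` be perfect with `M ∩ N = 1`, and let `α ∈ Irr M`,
`β ∈ Irr N` be `G`-invariant. If `β` extends to `G`, then `α × β ∈ Irr (MN)`
extends to `G` if and only if `α` extends to `G`. -/
theorem stmt5 (G : Type) [Group G] [Fintype G] (M N : Subgroup G)
    (hM : M.Normal) (hN : N.Normal) (hMN : M ⊓ N = ⊥)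
    (hMperf : ⁅M, M⁆ = M) (hNperf : ⁅N, N⁆ = N)
    (α : ↥M → ℂ) (hα : α ∈ Irr ↥M) (β : ↥N → ℂ) (hβ : β ∈ Irr ↥N)
    (hαinv : ∀ (g : G) (m : ↥M), α ⟨g * m * g⁻¹, hM.conj_mem m m.2 g⟩ = α m)
    (hβinv : ∀ (g : G) (n : ↥N), β ⟨g * n * g⁻¹, hN.conj_mem n n.2 g⟩ = β n)
    (hβext : ∃ χ ∈ Irr G, ∀ n : ↥N, χ ↑n = β n) :
    (∃ χ ∈ Irr G, ∀ (m n : G) (hm : m ∈ M) (hn : n ∈ N),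
        χ (m * n) = α ⟨m, hm⟩ * β ⟨n, hn⟩) ↔
      (∃ χ ∈ Irr G, ∀ m : ↥M, χ ↑m = α m) :=
  stmt5_general G M N hM hN hMN hMperf hNperf α hα β hβ hβext
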